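/- arXiv:1901.04147 — 4 statements merged into one kernel-verified Lean document; each statement's English description precedes it below -/
import Mathlib

section
/- Let {p_i, ρ_i}_{i=1}^m be an ensemble of density operators, let {Π_i}_{i=1}^m be a POVM, and let Z = Σ_{i=1}^m p_i Π_i ρ_i, assuming also Z = Σ_{i=1}^m p_i ρ_i Π_i and that Z is positive definite. Suppose (Z − p_i ρ_i) Π_i = 0 for all i. Define q_i σ_i = Z Π_i Z / Tr(Z²) and σ = Σ_i q_i σ_i. Then σ = Z²/Tr(Z²), and the PGM of the ensemble {q_i, σ_i}, namely E_i = σ^{-1/2}(q_i σ_i) σ^{-1/2}, satisfies E_i = Π_i for all i. -/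
/-! Since `∑ Πᵢ = 1`, the average state is `σ = Z² / Tr(Z²)`, whose positive square root is
`Z / √Tr(Z²)` because `Z > 0`. Conjugating `Z Πᵢ Z / Tr(Z²)` by its inverse `√Tr(Z²) · Z⁻¹`
cancels both the scalars and the factors `Z`, leaving `Πᵢ`. -/

open Matrix BigOperators
open scoped ComplexOrder

/-- The square root of a positive semidefinite matrix, as defined in the older Mathlib
(`Matrix.PosSemidef.sqrt`, removed since). -/
noncomputable def Matrix.PosSemidef.sqrt {n : Type*} [Fintype n] [DecidableEq n] {𝕜 : Type*}
    [RCLike 𝕜] {A : Matrix n n 𝕜} (hA : A.PosSemidef) : Matrix n n 𝕜 :=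
  hA.1.eigenvectorUnitary.1 * diagonal ((↑) ∘ (√·) ∘ hA.1.eigenvalues) *
  (star hA.1.eigenvectorUnitary : Matrix n n 𝕜)

namespace Matrix

variable {n 𝕜 : Type*} [Fintype n] [DecidableEq n] [RCLike 𝕜]

open scoped MatrixOrder in
theorem PosSemidef.sqrt_eq_cfcSqrt {A : Matrix n n 𝕜} (hA : A.PosSemidef) :
    hA.sqrt = CFC.sqrt A := by
  rw [CFC.sqrt_eq_real_sqrt _ hA.nonneg, cfcₙ_eq_cfc, hA.1.cfc_eq]
  simp [PosSemidef.sqrt, IsHermitian.cfc, Unitary.conjStarAlgAut_apply]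

open scoped MatrixOrder in
theorem PosSemidef.sqrt_eq_of_mul_self_eq {A B : Matrix n n 𝕜} (hA : A.PosSemidef)
    (hB : B.PosSemidef) (h : B * B = A) : hA.sqrt = B := by
  rw [hA.sqrt_eq_cfcSqrt]
  exact CFC.sqrt_unique h hB.nonneg

theorem PosDef.trace_sq_pos [Nonempty n] {Z : Matrix n n 𝕜} (hZ : Z.PosDef) :
    0 < (Z ^ 2).trace := by
  have hZ2 : (Z ^ 2).PosDef := by
    rw [sq]
    nth_rw 1 [← hZ.isHermitian.eq]
    exact PosDef.conjTranspose_mul_self Z (mulVec_injective_of_isUnit hZ.isUnit)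
  exact hZ2.trace_pos

theorem inv_smul_mul_sq_smul_mul_inv_smul {K : Type*} [Field K] {t : K} (ht : t ≠ 0)
    {Z : Matrix n n K} (hZ : IsUnit Z) (P : Matrix n n K) :
    (t • Z)⁻¹ * (t ^ 2 • (Z * P * Z)) * (t • Z)⁻¹ = P := by
  have hZdet : IsUnit Z.det := (isUnit_iff_isUnit_det Z).mp hZ
  have hinv : (t • Z)⁻¹ = t⁻¹ • Z⁻¹ := inv_smul' Z (Units.mk0 t ht) hZdet
  have hZZ : Z⁻¹ * (Z * P * Z) * Z⁻¹ = P := by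
    rw [mul_assoc Z, ← mul_assoc, nonsing_inv_mul Z hZdet, one_mul, mul_assoc,
      mul_nonsing_inv Z hZdet, mul_one]
  rw [hinv, smul_mul_smul_comm, smul_mul_smul_comm, hZZ,
    show t⁻¹ * t ^ 2 * t⁻¹ = 1 by field_simp, one_smul]

end Matrix

theorem stmt_2_general {d m : ℕ} (Pr : Fin m → Matrix (Fin d) (Fin d) ℂ)
    (hPrsum : ∑ i, Pr i = 1)
    (Z : Matrix (Fin d) (Fin d) ℂ)
    (hZpd : Z.PosDef)
    (hσ : (∑ i, ((Z ^ 2).trace)⁻¹ • (Z * Pr i * Z)).PosSemidef) :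
    (∑ i, ((Z ^ 2).trace)⁻¹ • (Z * Pr i * Z)) = ((Z ^ 2).trace)⁻¹ • Z ^ 2 ∧
    ∀ i, hσ.sqrt⁻¹ * (((Z ^ 2).trace)⁻¹ • (Z * Pr i * Z)) * hσ.sqrt⁻¹ = Pr i := by
  have hσ_eq : ∑ i, ((Z ^ 2).trace)⁻¹ • (Z * Pr i * Z) = ((Z ^ 2).trace)⁻¹ • Z ^ 2 := by
    rw [← Finset.smul_sum, ← Finset.sum_mul, ← Finset.mul_sum, hPrsum, mul_one, sq]
  refine ⟨hσ_eq, fun i => ?_⟩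
  cases isEmpty_or_nonempty (Fin d)
  · exact Subsingleton.elim _ _
  obtain ⟨r, hr, htr : (r : ℂ) = (Z ^ 2).trace⟩ :=
    RCLike.pos_iff_exists_ofReal.mp hZpd.trace_sq_pos
  have ht : ((√r⁻¹ : ℝ) : ℂ) ^ 2 = ((Z ^ 2).trace)⁻¹ := by
    rw [← Complex.ofReal_pow, Real.sq_sqrt (inv_nonneg.mpr hr.le), Complex.ofReal_inv, htr]
  have hsqrt : hσ.sqrt = ((√r⁻¹ : ℝ) : ℂ) • Z :=
    hσ.sqrt_eq_of_mul_self_eq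
      (hZpd.posSemidef.smul (Complex.zero_le_real.mpr (Real.sqrt_nonneg _)))
      (by rw [← sq, smul_pow, ht, hσ_eq])
  rw [hsqrt, ← ht]
  exact inv_smul_mul_sq_smul_mul_inv_smul
    (Complex.ofReal_ne_zero.mpr (Real.sqrt_pos.mpr (inv_pos.mpr hr)).ne') hZpd.isUnit _

/-- If `(Π i, Z)` is an optimal dual pair (with `Z > 0`), then the ensemble
`q i σ i = Z Π i Z / Tr(Z²)` has average state `σ = Z²/Tr(Z²)` and its PGM recovers `Π i`. -/
theorem stmt_2 {d m : ℕ} (p : Fin m → ℝ) (ρ Pr : Fin m → Matrix (Fin d) (Fin d) ℂ)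
    (hp : ∀ i, 0 < p i) (hpsum : ∑ i, p i = 1)
    (hρ : ∀ i, (ρ i).PosSemidef) (hρtr : ∀ i, (ρ i).trace = 1)
    (hPr : ∀ i, (Pr i).PosSemidef) (hPrsum : ∑ i, Pr i = 1)
    (Z : Matrix (Fin d) (Fin d) ℂ)
    (hZ1 : Z = ∑ i, (p i : ℂ) • (Pr i * ρ i))
    (hZ2 : Z = ∑ i, (p i : ℂ) • (ρ i * Pr i))
    (hZpd : Z.PosDef)
    (hopt : ∀ i, (Z - (p i : ℂ) • ρ i) * Pr i = 0)
    (hσ : (∑ i, ((Z ^ 2).trace)⁻¹ • (Z * Pr i * Z)).PosSemidef) :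
    (∑ i, ((Z ^ 2).trace)⁻¹ • (Z * Pr i * Z)) = ((Z ^ 2).trace)⁻¹ • Z ^ 2 ∧
    ∀ i, hσ.sqrt⁻¹ * (((Z ^ 2).trace)⁻¹ • (Z * Pr i * Z)) * hσ.sqrt⁻¹ = Pr i :=
  stmt_2_general Pr hPrsum Z hZpd hσ
end

section
/- Let {p_i, ρ_i}_{i=1}^m be an ensemble of density operators and (Π_i, Z) satisfy the optimality conditions: Z = Σ_j p_j ρ_j Π_j = Σ_j p_j Π_j ρ_j, (Z − p_i ρ_i) Π_i = Π_i (Z − p_i ρ_i) = 0, and Z ≥ p_i ρ_i for all i, with Z positive definite. Then for each i, Range(Z Π_i Z) ⊆ Range(ρ_i). -/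
open Matrix BigOperators
open scoped ComplexOrder

/-- If `(Π i, Z)` satisfies the optimality conditions with `Z > 0`, then
`Range(Z Π i Z) ⊆ Range(ρ i)` for each `i`. -/
theorem stmt_3 {d m : ℕ} (p : Fin m → ℝ) (ρ Pr : Fin m → Matrix (Fin d) (Fin d) ℂ)
    (hp : ∀ i, 0 < p i) (hpsum : ∑ i, p i = 1)
    (hρ : ∀ i, (ρ i).PosSemidef) (hρtr : ∀ i, (ρ i).trace = 1)
    (hPr : ∀ i, (Pr i).PosSemidef) (hPrsum : ∑ i, Pr i = 1)
    (Z : Matrix (Fin d) (Fin d) ℂ)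
    (hZ1 : Z = ∑ i, (p i : ℂ) • (ρ i * Pr i))
    (hZ2 : Z = ∑ i, (p i : ℂ) • (Pr i * ρ i))
    (hopt1 : ∀ i, (Z - (p i : ℂ) • ρ i) * Pr i = 0)
    (hopt1' : ∀ i, Pr i * (Z - (p i : ℂ) • ρ i) = 0)
    (hopt2 : ∀ i, (Z - (p i : ℂ) • ρ i).PosSemidef)
    (hZpd : Z.PosDef) :
    ∀ i, LinearMap.range (Z * Pr i * Z).mulVecLin ≤ LinearMap.range (ρ i).mulVecLin := by
  intro i
  have key : Z * Pr i = ρ i * ((p i : ℂ) • Pr i) := by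
    have h := hopt1 i
    rw [sub_mul] at h
    have h2 : Z * Pr i = ((p i : ℂ) • ρ i) * Pr i := by exact sub_eq_zero.mp h
    rw [h2]
    simp [Matrix.smul_mul, Matrix.mul_smul]
  have hZPZ : Z * Pr i * Z = ρ i * (((p i : ℂ) • Pr i) * Z) := by
    rw [key, Matrix.mul_assoc]
  rw [hZPZ, Matrix.mulVecLin_mul]
  exact LinearMap.range_comp_le_range _ _
end

section
/- Let M = [[A, B], [B†, W]] be a hermitian positive semidefinite block matrix with A positive definite of size r×r. Then rank(M) = r if and only if W = B† A^{-1} B. -/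
open Matrix BigOperators
open scoped ComplexOrder

/-- For a hermitian PSD block matrix `M = [[A,B],[Bᴴ,W]]` with `A` positive
definite of size `r`, `rank M = r` iff `W = Bᴴ A⁻¹ B`. -/
theorem stmt_7 {r s : ℕ} (A : Matrix (Fin r) (Fin r) ℂ) (B : Matrix (Fin r) (Fin s) ℂ)
    (W : Matrix (Fin s) (Fin s) ℂ)
    (hM : (Matrix.fromBlocks A B Bᴴ W).PosSemidef) (hA : A.PosDef) :
    (Matrix.fromBlocks A B Bᴴ W).rank = r ↔ W = Bᴴ * A⁻¹ * B := by
  classical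
  haveI : Invertible A := hA.isUnit.invertible
  set M : Matrix (Fin r ⊕ Fin s) (Fin r ⊕ Fin s) ℂ := Matrix.fromBlocks A B Bᴴ W with hMdef
  set S : Matrix (Fin s) (Fin s) ℂ := W - Bᴴ * A⁻¹ * B with hSdef
  -- the embedding y ↦ (-(A⁻¹ B) y, y)
  let φ : ((Fin s) → ℂ) →ₗ[ℂ] ((Fin r ⊕ Fin s) → ℂ) :=
    { toFun := fun y => Sum.elim (-((A⁻¹ * B) *ᵥ y)) y
      map_add' := by
        intro x y; funext i
        cases i <;> simp [Matrix.mulVec_add]; ring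
      map_smul' := by
        intro c x; funext i
        cases i <;> simp [Matrix.mulVec_smul] }
  have hφinj : Function.Injective φ := by
    intro x y h
    funext j
    exact congrFun h (Sum.inr j)
  have key : LinearMap.ker M.mulVecLin = Submodule.map φ (LinearMap.ker S.mulVecLin) := by
    ext x
    simp only [LinearMap.mem_ker, Submodule.mem_map, Matrix.mulVecLin_apply]
    constructor
    · intro hx
      have h1 := congrFun hx
      have htop : A *ᵥ (x ∘ Sum.inl) + B *ᵥ (x ∘ Sum.inr) = 0 := by
        funext i
        have := h1 (Sum.inl i)
        rwa [hMdef, fromBlocks_mulVec] at this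
      have hbot : Bᴴ *ᵥ (x ∘ Sum.inl) + W *ᵥ (x ∘ Sum.inr) = 0 := by
        funext i
        have := h1 (Sum.inr i)
        rwa [hMdef, fromBlocks_mulVec] at this
      have hu : x ∘ Sum.inl = -((A⁻¹ * B) *ᵥ (x ∘ Sum.inr)) := by
        have := congrArg (fun z => A⁻¹ *ᵥ z) htop
        simpa [Matrix.mulVec_add, Matrix.mulVec_mulVec,
          Matrix.nonsing_inv_mul A (isUnit_iff_isUnit_det A |>.mp hA.isUnit),
          Matrix.mulVec_zero, eq_neg_iff_add_eq_zero] using this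
      have hu' : (A⁻¹ * B) *ᵥ (x ∘ Sum.inr) = -(x ∘ Sum.inl) := by
        rw [hu]; simp
      refine ⟨x ∘ Sum.inr, ?_, ?_⟩
      · rw [hSdef, Matrix.sub_mulVec]
        rw [show (Bᴴ * A⁻¹ * B) *ᵥ (x ∘ Sum.inr) = Bᴴ *ᵥ ((A⁻¹ * B) *ᵥ (x ∘ Sum.inr)) by
          simp [Matrix.mulVec_mulVec, Matrix.mul_assoc]]
        rw [hu']
        simpa [Matrix.mulVec_neg, sub_neg_eq_add, add_comm] using hbot
      · funext i
        cases i with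
        | inl i => exact (congrFun hu i).symm
        | inr i => simp [φ]
    · rintro ⟨y, hy, rfl⟩
      rw [hMdef, fromBlocks_mulVec]
      have h1 : (φ y) ∘ Sum.inl = -((A⁻¹ * B) *ᵥ y) := rfl
      have h2 : (φ y) ∘ Sum.inr = y := rfl
      rw [h1, h2]
      have hAu : A *ᵥ -((A⁻¹ * B) *ᵥ y) + B *ᵥ y = 0 := by
        simp [Matrix.mulVec_neg, Matrix.mulVec_mulVec, Matrix.mul_inv_cancel_left_of_invertible]
      have hBu : Bᴴ *ᵥ -((A⁻¹ * B) *ᵥ y) + W *ᵥ y = 0 := by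
        have : Bᴴ *ᵥ ((A⁻¹ * B) *ᵥ y) = (Bᴴ * A⁻¹ * B) *ᵥ y := by
          simp [Matrix.mulVec_mulVec, Matrix.mul_assoc]
        rw [Matrix.mulVec_neg, this]
        have := congrFun (congrArg (· *ᵥ y) hSdef.symm)
        have hy' : S *ᵥ y = 0 := hy
        rw [hSdef, Matrix.sub_mulVec, sub_eq_zero] at hy'
        rw [hy']; exact neg_add_cancel _
      rw [hAu, hBu]
      simp
  have hdim : Module.finrank ℂ (LinearMap.ker M.mulVecLin)
      = Module.finrank ℂ (LinearMap.ker S.mulVecLin) := by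
    rw [key]
    exact (Submodule.equivMapOfInjective φ hφinj _).finrank_eq.symm
  have hrn : M.rank + Module.finrank ℂ (LinearMap.ker M.mulVecLin) = r + s := by
    have h := LinearMap.finrank_range_add_finrank_ker M.mulVecLin
    rw [Module.finrank_pi, Fintype.card_sum, Fintype.card_fin, Fintype.card_fin] at h
    exact h
  have hs0 : Module.finrank ℂ (LinearMap.ker S.mulVecLin) = s ↔ S = 0 := by
    constructor
    · intro h
      have htop : LinearMap.ker S.mulVecLin = ⊤ := by
        apply Submodule.eq_top_of_finrank_eq
        rw [h, Module.finrank_pi, Fintype.card_fin]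
      have hz : S.mulVecLin = 0 := LinearMap.ker_eq_top.mp htop
      ext i j
      have h2 : S *ᵥ Pi.single j 1 = 0 := by
        simpa using congrFun (congrArg DFunLike.coe hz) (Pi.single j 1)
      have h3 := congrFun h2 i
      simpa [Matrix.mulVec_single] using h3
    · intro h
      rw [h]
      rw [Matrix.mulVecLin_zero, LinearMap.ker_zero, finrank_top, Module.finrank_pi, Fintype.card_fin]
  have hfin : M.rank = r ↔ S = 0 := by
    rw [← hs0]
    omega
  rw [hfin, hSdef, sub_eq_zero]
end

section
/- Let {p_i, ρ_i}_{i=1}^m be an ensemble of linearly independent density operators on a d-dimensional Hilbert space (the subspaces Range(ρ_i) form a direct sum decomposition of the space, Σ rank ρ_i = d), and let {Π_i}_{i=1}^m be an orthogonal projective measurement with rank(Π_i) = rank(ρ_i). If (1) Π_j (p_j ρ_j − p_i ρ_i) Π_i = 0 for all i ≠ j, and (2) Σ_{j=1}^m p_j ρ_j Π_j is positive definite, then Σ_{j=1}^m p_j ρ_j Π_j − p_i ρ_i is positive semidefinite for every i. -/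
open Matrix BigOperators
open scoped ComplexOrder

/-!
Put `Z = ∑ⱼ pⱼ ρⱼ Πⱼ` and `A = pᵢ ρᵢ`. Orthogonality of the projections gives `Z Πᵢ = A Πᵢ`.
With `S = √Z`, the hermitian matrix `R = S⁻¹ A S⁻¹` fixes the range of `S Πᵢ S`, and both have
rank `rank ρᵢ = rank Πᵢ`, so `R` is the identity on its own range: an orthogonal projection.
Hence `1 - R ≥ 0`, and conjugating by `S` gives `Z - A = S (1 - R) S ≥ 0`.
-/

theorem OrthogonalIdempotents.sum_mul_mul {R ι : Type*} [Semiring R] [Fintype ι] {e : ι → R}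
    (he : OrthogonalIdempotents e) (a : ι → R) (i : ι) :
    (∑ j, a j * e j) * e i = a i * e i := by
  rw [Finset.sum_mul, Finset.sum_eq_single i]
  · rw [mul_assoc, (he.idem i).eq]
  · intro j _ hji
    rw [mul_assoc, he.ortho hji, mul_zero]
  · simp

namespace Matrix

open scoped MatrixOrder

variable {n : Type*} [Fintype n] [DecidableEq n]

theorem mul_self_eq_of_mul_eq_of_rank_le {K : Type*} [Field K] {R E : Matrix n n K}
    (hRE : R * E = E) (hrank : R.rank ≤ E.rank) : R * R = R := by
  have hrange : LinearMap.range R.mulVecLin = LinearMap.range E.mulVecLin := by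
    refine (Submodule.eq_of_le_of_finrank_le ?_ hrank).symm
    rw [← hRE, mulVecLin_mul]
    exact LinearMap.range_comp_le_range _ _
  refine toLin'.injective (LinearMap.ext fun x => ?_)
  obtain ⟨y, hy⟩ : R *ᵥ x ∈ LinearMap.range E.mulVecLin := hrange ▸ ⟨x, rfl⟩
  simp only [toLin'_mul, LinearMap.comp_apply, toLin'_apply]
  rw [← hy, mulVecLin_apply, mulVec_mulVec, hRE]

theorem rank_mul_mul_of_isUnit_det {R : Type*} [CommRing R] (U A V : Matrix n n R)
    (hU : IsUnit U.det) (hV : IsUnit V.det) : (U * A * V).rank = A.rank := by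
  rw [rank_mul_eq_left_of_isUnit_det V _ hV, rank_mul_eq_right_of_isUnit_det U A hU]

theorem PosDef.exists_posDef_mul_self_eq {Z : Matrix n n ℂ} (hZ : Z.PosDef) :
    ∃ S : Matrix n n ℂ, S.PosDef ∧ S * S = Z :=
  ⟨CFC.sqrt Z, (IsStrictlyPositive.sqrt Z hZ.isStrictlyPositive).posDef,
    CFC.sqrt_mul_sqrt_self Z hZ.posSemidef.nonneg⟩

theorem PosDef.posSemidef_sub_of_mul_eq_of_rank_le {Z A P : Matrix n n ℂ} (hZ : Z.PosDef)
    (hA : A.IsHermitian) (hZP : Z * P = A * P) (hrank : A.rank ≤ P.rank) :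
    (Z - A).PosSemidef := by
  obtain ⟨S, hS, rfl⟩ := hZ.exists_posDef_mul_self_eq
  have hSdet : IsUnit S.det := hS.isUnit.map detMonoidHom
  have hSinvdet : IsUnit S⁻¹.det := isUnit_nonsing_inv_det S hSdet
  have hSinv : S⁻¹ * S = 1 := nonsing_inv_mul S hSdet
  set R := S⁻¹ * A * S⁻¹
  have hRE : R * (S * P * S) = S * P * S := by
    calc R * (S * P * S) = S⁻¹ * (A * P) * S := by
          simp only [R, Matrix.mul_assoc, ← Matrix.mul_assoc S⁻¹ S, hSinv, Matrix.one_mul]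
    _ = S * P * S := by
          rw [← hZP, Matrix.mul_assoc S, ← Matrix.mul_assoc S⁻¹, hSinv, Matrix.one_mul]
  have hR : IsStarProjection R := by
    refine ⟨mul_self_eq_of_mul_eq_of_rank_le hRE ?_, ?_⟩
    · rwa [rank_mul_mul_of_isUnit_det _ _ _ hSinvdet hSinvdet,
        rank_mul_mul_of_isUnit_det _ _ _ hSdet hSdet]
    · simp only [IsSelfAdjoint, R, star_eq_conjTranspose, conjTranspose_mul, hS.isHermitian.inv.eq,
        hA.eq, Matrix.mul_assoc]
  have hconj : star S * (1 - R) * S = S * S - A := by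
    rw [star_eq_conjTranspose, hS.isHermitian.eq]
    simp only [R, Matrix.mul_sub, Matrix.sub_mul, Matrix.mul_one, ← Matrix.mul_assoc,
      mul_nonsing_inv S hSdet, Matrix.one_mul]
    rw [Matrix.mul_assoc, hSinv, Matrix.mul_one]
  rw [← nonneg_iff_posSemidef, ← hconj]
  exact star_left_conjugate_nonneg hR.one_sub.nonneg S

end Matrix

theorem stmt_9_general {d m : ℕ} (p : Fin m → ℝ) (ρ Pr : Fin m → Matrix (Fin d) (Fin d) ℂ)
    (hp : ∀ i, 0 < p i)
    (hρ : ∀ i, (ρ i).PosSemidef)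
    (hproj : ∀ i j, Pr i * Pr j = if i = j then Pr i else 0)
    (hrank : ∀ i, (Pr i).rank = (ρ i).rank)
    (h2 : (∑ j, (p j : ℂ) • (ρ j * Pr j)).PosDef) :
    ∀ i, ((∑ j, (p j : ℂ) • (ρ j * Pr j)) - (p i : ℂ) • ρ i).PosSemidef := by
  intro i
  have hPr : OrthogonalIdempotents Pr :=
    ⟨fun j => (hproj j j).trans (if_pos rfl), fun j k hjk => (hproj j k).trans (if_neg hjk)⟩
  have hZPr : (∑ j, (p j : ℂ) • (ρ j * Pr j)) * Pr i = ((p i : ℂ) • ρ i) * Pr i := by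
    simp_rw [← smul_mul_assoc]
    exact hPr.sum_mul_mul _ i
  have hpi : (p i : ℂ) ∈ nonZeroDivisors ℂ :=
    mem_nonZeroDivisors_of_ne_zero (Complex.ofReal_ne_zero.mpr (hp i).ne')
  refine h2.posSemidef_sub_of_mul_eq_of_rank_le ((hρ i).isHermitian.smul (Complex.conj_ofReal _))
    hZPr ?_
  rw [rank_smul_of_mem_nonZeroDivisors _ hpi, hrank]

/-- Simplified optimality conditions for linearly independent ensembles:
conditions (1) and (2) imply `∑ j p j ρ j Π j ≥ p i ρ i` for all `i`. -/
theorem stmt_9 {d m : ℕ} (p : Fin m → ℝ) (ρ Pr : Fin m → Matrix (Fin d) (Fin d) ℂ)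
    (hp : ∀ i, 0 < p i) (hpsum : ∑ i, p i = 1)
    (hρ : ∀ i, (ρ i).PosSemidef) (hρtr : ∀ i, (ρ i).trace = 1)
    (hindep : iSupIndep fun i => LinearMap.range (ρ i).mulVecLin)
    (hspan : (⨆ i, LinearMap.range (ρ i).mulVecLin) = ⊤)
    (hPrH : ∀ i, (Pr i).IsHermitian)
    (hproj : ∀ i j, Pr i * Pr j = if i = j then Pr i else 0)
    (hPrsum : ∑ i, Pr i = 1)
    (hrank : ∀ i, (Pr i).rank = (ρ i).rank)
    (h1 : ∀ i j, i ≠ j → Pr j * ((p j : ℂ) • ρ j - (p i : ℂ) • ρ i) * Pr i = 0)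
    (h2 : (∑ j, (p j : ℂ) • (ρ j * Pr j)).PosDef) :
    ∀ i, ((∑ j, (p j : ℂ) • (ρ j * Pr j)) - (p i : ℂ) • ρ i).PosSemidef :=
  stmt_9_general p ρ Pr hp hρ hproj hrank h2
end
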